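/- De dicto does not imply de re: there exists a genealogical Kripke model M with world s₀ and a propositional letter r such that M,s₀ ⊨ □∃x.¿r?x (at every future point some child model satisfies r) but M,s₀ ⊭ ∃x.□¿r?x (no single child model satisfies r at all future points). -/

import Mathlib

set_option linter.unusedVariables false

/-! Genealogical Kripke models and first-order modal ξ-calculus (FOMC). -/

/-- A genealogical Kripke model over a fixed type `W` of possible worlds,
propositional letters `P` and constant symbols `C`.  The children models are
given by an index type `ι` with a family `child : ι → GKM W P C`. -/
inductive GKM (W P C : Type) : Type 1 where
  | mk (S : Set W) (Sne : S.Nonempty) (R : W → W → Prop) (V : P → Set W)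
      (ι : Type) (child : ι → GKM W P C)
      (I : W → C → Option ι) (T : W → ι → W) : GKM W P C

namespace GKM

variable {W P C : Type}

def S : GKM W P C → Set W
  | .mk S _ _ _ _ _ _ _ => S

def R : GKM W P C → W → W → Prop
  | .mk _ _ R _ _ _ _ _ => R

def V : GKM W P C → P → Set W
  | .mk _ _ _ V _ _ _ _ => V

/-- The index type of the set of children models. -/
def Idx : GKM W P C → Type
  | .mk _ _ _ _ ι _ _ _ => ι

def child : (M : GKM W P C) → M.Idx → GKM W P C
  | .mk _ _ _ _ _ c _ _ => c

def I : (M : GKM W P C) → W → C → Option M.Idx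
  | .mk _ _ _ _ _ _ I _ => I

def T : (M : GKM W P C) → W → M.Idx → W
  | .mk _ _ _ _ _ _ _ T => T

/-- `IsChild M' M` : `M'` is a member of the set `N_M` of children models of `M`. -/
def IsChild (M' M : GKM W P C) : Prop := ∃ a, M.child a = M'

theorem acc_isChild (M : GKM W P C) : Acc IsChild M := by
  induction M with
  | mk S ne R V ι c I T ih =>
    refine Acc.intro _ fun M' h => ?_
    obtain ⟨a, ha⟩ := h
    subst ha
    exact ih a

theorem isChild_wf : WellFounded (@IsChild W P C) := ⟨acc_isChild⟩

instance : WellFoundedRelation (GKM W P C) :=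
  ⟨Relation.TransGen IsChild, isChild_wf.transGen⟩

/-- Hereditary well-formedness: `R ⊆ S × S` and `T(s,N') ∈ S_{N'}`, recursively. -/
def WF (M : GKM W P C) : Prop :=
  (∀ u u', M.R u u' → u ∈ M.S ∧ u' ∈ M.S) ∧
  (∀ s ∈ M.S, ∀ a : M.Idx, M.T s a ∈ (M.child a).S) ∧
  (∀ a : M.Idx, WF (M.child a))
termination_by M
decreasing_by exact Relation.TransGen.single ⟨_, rfl⟩

/-- Finitely many children, hereditarily. -/
def ChildFin (M : GKM W P C) : Prop :=
  Finite M.Idx ∧ ∀ a : M.Idx, ChildFin (M.child a)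
termination_by M
decreasing_by exact Relation.TransGen.single ⟨_, rfl⟩

/-- Image-finite genealogical Kripke model. -/
def ImageFinite (M : GKM W P C) : Prop :=
  (∀ s ∈ M.S, {t | M.R s t}.Finite) ∧ Finite M.Idx ∧
    ∀ a : M.Idx, ImageFinite (M.child a)
termination_by M
decreasing_by exact Relation.TransGen.single ⟨_, rfl⟩

end GKM

/-- Formulas of first-order modal ξ-calculus.  Model variables and formula
variables are both encoded as natural numbers (in separate namespaces).
`qmv φ x` is `¿φ?x`, `qmc φ c` is `¿φ?c`, `all x φ` is `∀x.φ` and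
`xi X φ` is `ξX.φ`. -/
inductive Fm (P C : Type) : Type where
  | fvar : ℕ → Fm P C
  | top : Fm P C
  | prop : P → Fm P C
  | qmv : Fm P C → ℕ → Fm P C
  | qmc : Fm P C → C → Fm P C
  | neg : Fm P C → Fm P C
  | and : Fm P C → Fm P C → Fm P C
  | box : Fm P C → Fm P C
  | all : ℕ → Fm P C → Fm P C
  | xi : ℕ → Fm P C → Fm P C

namespace Fm

variable {P C : Type}

/-- `∃x.φ := ¬∀x.¬φ`. -/
def exi (x : ℕ) (φ : Fm P C) : Fm P C := .neg (.all x (.neg φ))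

/-- `◇φ := ¬□¬φ`. -/
def dia (φ : Fm P C) : Fm P C := .neg (.box (.neg φ))

/-- Free model variables. -/
def fmv : Fm P C → Finset ℕ
  | .fvar _ => ∅
  | .top => ∅
  | .prop _ => ∅
  | .qmv φ x => fmv φ ∪ {x}
  | .qmc φ _ => fmv φ
  | .neg φ => fmv φ
  | .and φ ψ => fmv φ ∪ fmv ψ
  | .box φ => fmv φ
  | .all x φ => fmv φ \ {x}
  | .xi _ φ => fmv φ

/-- Formula variables with a free occurrence *outside* every `¿ ?` pair.
Such occurrences are never bound by `ξ`. -/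
def ffvOut : Fm P C → Finset ℕ
  | .fvar X => {X}
  | .top => ∅
  | .prop _ => ∅
  | .qmv _ _ => ∅
  | .qmc _ _ => ∅
  | .neg φ => ffvOut φ
  | .and φ ψ => ffvOut φ ∪ ffvOut ψ
  | .box φ => ffvOut φ
  | .all _ φ => ffvOut φ
  | .xi _ φ => ffvOut φ

/-- Formula variables with a free occurrence *inside* some `¿ ?` pair
(these are the occurrences a surrounding `ξX.` can bind). -/
def ffvIn : Fm P C → Finset ℕ
  | .fvar _ => ∅
  | .top => ∅
  | .prop _ => ∅
  | .qmv φ _ => ffvOut φ ∪ ffvIn φ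
  | .qmc φ _ => ffvOut φ ∪ ffvIn φ
  | .neg φ => ffvIn φ
  | .and φ ψ => ffvIn φ ∪ ffvIn ψ
  | .box φ => ffvIn φ
  | .all _ φ => ffvIn φ
  | .xi X φ => ffvIn φ \ {X}

/-- Free formula variables. -/
def ffv (φ : Fm P C) : Finset ℕ := ffvOut φ ∪ ffvIn φ

/-- The extra subformula conditions of Definition 2.3. -/
def Good : Fm P C → Prop
  | .fvar _ => True
  | .top => True
  | .prop _ => True
  | .qmv φ _ => fmv φ = ∅ ∧ Good φ
  | .qmc φ _ => fmv φ = ∅ ∧ Good φ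
  | .neg φ => Good φ
  | .and φ ψ => Good φ ∧ Good ψ
  | .box φ => Good φ
  | .all _ φ => Good φ
  | .xi X φ => fmv (Fm.xi X φ) = ∅ ∧ ffv (Fm.xi X φ) = ∅ ∧ Good φ

/-- FOMC-sentences (Definition 2.3). -/
def IsSentence (φ : Fm P C) : Prop := fmv φ = ∅ ∧ ffv φ = ∅ ∧ Good φ

end Fm

namespace GKM

variable {W P C : Type}

mutual

/-- Semantics (Definition 2.11).  `i` interprets model variables as children
models of the current model (via their indices), and `j` interprets formula
variables semantically, as maps assigning to each genealogical Kripke model a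
set of worlds. -/
def eval : (φ : Fm P C) → (M : GKM W P C) → (ℕ → Option M.Idx) →
    (ℕ → Option (GKM W P C → Set W)) → Set W
  | .fvar X, M, _, j => M.S ∩ ((j X).elim ∅ fun F => F M)
  | .top, M, _, _ => M.S
  | .prop p, M, _, _ => M.S ∩ M.V p
  | .qmv φ x, M, i, j =>
      {s | s ∈ M.S ∧ ∃ a, i x = some a ∧
        M.T s a ∈ eval φ (M.child a) (fun _ => none) j}
  | .qmc φ c, M, _, j =>
      {s | s ∈ M.S ∧ ∃ a, M.I s c = some a ∧
        M.T s a ∈ eval φ (M.child a) (fun _ => none) j}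
  | .neg φ, M, i, j => M.S \ eval φ M i j
  | .and φ ψ, M, i, j => eval φ M i j ∩ eval ψ M i j
  | .box φ, M, i, j => {s | s ∈ M.S ∧ ∀ t, M.R s t → t ∈ eval φ M i j}
  | .all x φ, M, i, j =>
      {s | s ∈ M.S ∧ ∀ a : M.Idx, s ∈ eval φ M (Function.update i x (some a)) j}
  | .xi X φ, M, i, j => eval φ M i (Function.update j X (some (fun N => xiClosure φ X j N)))
  termination_by φ M i j => (sizeOf φ, 1)

/-- The semantic value bound to `X` by `ξX.φ` under environment `j`: the
(depth-guarded) fixed point `F` with `F N = ⟦φ⟧^N_{∅, j[X:=F]}`. -/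
def xiClosure (φ : Fm P C) (X : ℕ) (j : ℕ → Option (GKM W P C → Set W))
    (N₀ : GKM W P C) : Set W :=
  WellFounded.fix (isChild_wf.transGen)
    (fun N rec =>
      eval φ N (fun _ => none) (Function.update j X (some fun N' =>
        @dite (Set W) (Relation.TransGen IsChild N' N) (Classical.dec _)
          (fun h => rec N' h) (fun _ => ∅))))
    N₀
  termination_by (sizeOf φ, 2)

end

/-- `M,s ⊨ φ` : truth of the FOMC-sentence `φ` at the pointed model `M,s`. -/
def Sat (M : GKM W P C) (s : W) (φ : Fm P C) : Prop :=
  s ∈ eval φ M (fun _ => none) (fun _ => none)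

/-- Environments arising from binding sentences `ξX.ψ` (used for the
intermediate stages of evaluating an FOMC-sentence). -/
inductive GoodEnv : (ℕ → Option (GKM W P C → Set W)) → Prop where
  | nil : GoodEnv (fun _ => none)
  | cons {j : ℕ → Option (GKM W P C → Set W)} {X : ℕ} {ψ : Fm P C} :
      GoodEnv j → (Fm.xi X ψ).IsSentence →
      GoodEnv (Function.update j X (some (xiClosure ψ X j)))

/-- Bisimilarity of pointed genealogical Kripke models (Definition 4.2). -/
def Bisim (M : GKM W P C) (s : W) (N : GKM W P C) (t : W) : Prop :=
  ∃ (Z : W → W → Prop) (f : W → W → M.Idx → N.Idx → Prop),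
    Z s t ∧
    (∀ u v, Z u v → u ∈ M.S ∧ v ∈ N.S) ∧
    (∀ u v, Z u v → ∀ p : P, u ∈ M.V p ↔ v ∈ N.V p) ∧
    (∀ u v, Z u v → ∀ a : M.Idx, ∃ b : N.Idx, f u v a b) ∧
    (∀ u v, Z u v → ∀ b : N.Idx, ∃ a : M.Idx, f u v a b) ∧
    (∀ u v, Z u v → ∀ a b, f u v a b →
      Bisim (M.child a) (M.T u a) (N.child b) (N.T v b)) ∧
    (∀ u v, Z u v → ∀ c : C,
      (M.I u c = none ∧ N.I v c = none) ∨
      (∃ a b, M.I u c = some a ∧ N.I v c = some b ∧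
        Bisim (M.child a) (M.T u a) (N.child b) (N.T v b))) ∧
    (∀ u v, Z u v → ∀ u', M.R u u' →
      ∃ v', N.R v v' ∧ Z u' v' ∧ ∀ a b, f u v a b → f u' v' a b) ∧
    (∀ u v, Z u v → ∀ v', N.R v v' →
      ∃ u', M.R u u' ∧ Z u' v' ∧ ∀ a b, f u v a b → f u' v' a b)
termination_by M
decreasing_by all_goals exact Relation.TransGen.single ⟨_, rfl⟩

/-- The conditions of Definition 4.2 for a specific pair `(Z, f)` of witnesses. -/
def IsBisim (M N : GKM W P C) (Z : W → W → Prop)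
    (f : W → W → M.Idx → N.Idx → Prop) : Prop :=
  (∀ u v, Z u v → u ∈ M.S ∧ v ∈ N.S) ∧
  (∀ u v, Z u v → ∀ p : P, u ∈ M.V p ↔ v ∈ N.V p) ∧
  (∀ u v, Z u v → ∀ a : M.Idx, ∃ b : N.Idx, f u v a b) ∧
  (∀ u v, Z u v → ∀ b : N.Idx, ∃ a : M.Idx, f u v a b) ∧
  (∀ u v, Z u v → ∀ a b, f u v a b →
    Bisim (M.child a) (M.T u a) (N.child b) (N.T v b)) ∧
  (∀ u v, Z u v → ∀ c : C,
    (M.I u c = none ∧ N.I v c = none) ∨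
    (∃ a b, M.I u c = some a ∧ N.I v c = some b ∧
      Bisim (M.child a) (M.T u a) (N.child b) (N.T v b))) ∧
  (∀ u v, Z u v → ∀ u', M.R u u' →
    ∃ v', N.R v v' ∧ Z u' v' ∧ ∀ a b, f u v a b → f u' v' a b) ∧
  (∀ u v, Z u v → ∀ v', N.R v v' →
    ∃ u', M.R u u' ∧ Z u' v' ∧ ∀ a b, f u v a b → f u' v' a b)

/-- `n`-fold relational composition. -/
def relPow (r : W → W → Prop) : ℕ → W → W → Prop
  | 0 => fun a b => a = b
  | n + 1 => fun a c => ∃ b, relPow r n a b ∧ r b c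

/-- Standard Kripke semantics on the frame `(S_M, R_M)` with valuation `V_M`
(meaningful for pure propositional modal formulas). -/
def kEval (M : GKM W P C) : Fm P C → Set W
  | .top => M.S
  | .prop p => M.S ∩ M.V p
  | .neg φ => M.S \ kEval M φ
  | .and φ ψ => kEval M φ ∩ kEval M ψ
  | .box φ => {s | s ∈ M.S ∧ ∀ t, M.R s t → t ∈ kEval M φ}
  | _ => ∅

end GKM

/-- Pure propositional modal formulas. -/
def Fm.Pure {P C : Type} : Fm P C → Prop
  | .top => True
  | .prop _ => True
  | .neg φ => Pure φ
  | .and φ ψ => Pure φ ∧ Pure ψ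
  | .box φ => Pure φ
  | _ => False

namespace GKM

variable {W P C : Type}

theorem mem_eval_prop {p : P} {M : GKM W P C} {i j} {s : W} :
    s ∈ eval (.prop p) M i j ↔ s ∈ M.S ∧ s ∈ M.V p := by
  rw [eval]; rfl

theorem mem_eval_qmv {φ : Fm P C} {x : ℕ} {M : GKM W P C} {i j} {s : W} :
    s ∈ eval (.qmv φ x) M i j ↔
      s ∈ M.S ∧ ∃ a, i x = some a ∧ M.T s a ∈ eval φ (M.child a) (fun _ => none) j := by
  rw [eval]; rfl

theorem mem_eval_box {φ : Fm P C} {M : GKM W P C} {i j} {s : W} :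
    s ∈ eval (.box φ) M i j ↔ s ∈ M.S ∧ ∀ t, M.R s t → t ∈ eval φ M i j := by
  rw [eval]; rfl

theorem mem_eval_exi {x : ℕ} {φ : Fm P C} {M : GKM W P C} {i j} {s : W} :
    s ∈ eval (.exi x φ) M i j ↔
      s ∈ M.S ∧ ∃ a, s ∈ eval φ M (Function.update i x (some a)) j := by
  simp only [Fm.exi, eval, Set.mem_sdiff, Set.mem_ofPred_eq, not_and, not_forall, not_not]
  tauto

theorem sat_box_exi_qmv_iff {x : ℕ} {φ : Fm P C} {M : GKM W P C} {s : W} :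
    Sat M s (.box (.exi x (.qmv φ x))) ↔
      s ∈ M.S ∧ ∀ t, M.R s t → t ∈ M.S ∧ ∃ a, Sat (M.child a) (M.T t a) φ := by
  simp only [Sat, mem_eval_box, mem_eval_exi, mem_eval_qmv, Function.update_self,
    Option.some.injEq, exists_eq_left', exists_and_left, and_self_left]

theorem sat_exi_box_qmv_iff {x : ℕ} {φ : Fm P C} {M : GKM W P C} {s : W} :
    Sat M s (.exi x (.box (.qmv φ x))) ↔
      s ∈ M.S ∧ ∃ a, ∀ t, M.R s t → t ∈ M.S ∧ Sat (M.child a) (M.T t a) φ := by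
  simp only [Sat, mem_eval_box, mem_eval_exi, mem_eval_qmv, Function.update_self,
    Option.some.injEq, exists_eq_left', exists_and_left, and_self_left]

end GKM

def runsAtZero : GKM ℕ Unit Empty :=
  .mk {0, 1} ⟨0, by simp⟩ (fun _ _ => False) (fun _ => {0}) Empty Empty.elim
    (fun _ c => c.elim) (fun _ e => e.elim)

/-- Child `true` sits at the current world and child `false` at the other one, so `r` holds in
some child at both worlds, but in a different child at each. -/
def alternating : GKM ℕ Unit Empty :=
  .mk {0, 1} ⟨0, by simp⟩ (fun u v => u ∈ ({0, 1} : Set ℕ) ∧ v ∈ ({0, 1} : Set ℕ))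
    (fun _ => ∅) Bool (fun _ => runsAtZero) (fun _ c => c.elim)
    (fun s b => if b then s else 1 - s)

theorem sat_runsAtZero_prop {w : ℕ} : GKM.Sat runsAtZero w (.prop ()) ↔ w = 0 := by
  simp only [GKM.Sat, GKM.mem_eval_prop, runsAtZero, GKM.S, GKM.V]
  simp +contextual

/-- de dicto does not imply de re: there is a pointed model
satisfying `□∃x.¿r?x` but not `∃x.□¿r?x` (with `r` the unique propositional
letter of `P := Unit`). -/
theorem stmt14 :
    ∃ (M : GKM ℕ Unit Empty) (s₀ : ℕ), s₀ ∈ M.S ∧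
      GKM.Sat M s₀ (Fm.box (Fm.exi 0 (Fm.qmv (Fm.prop ()) 0))) ∧
      ¬ GKM.Sat M s₀ (Fm.exi 0 (Fm.box (Fm.qmv (Fm.prop ()) 0))) := by
  have h0 : (0 : ℕ) ∈ alternating.S := by simp [alternating, GKM.S]
  refine ⟨alternating, 0, h0, ?_, ?_⟩
  · rw [GKM.sat_box_exi_qmv_iff]
    refine ⟨h0, fun t ⟨_, ht⟩ => ⟨ht, ?_⟩⟩
    simp only [alternating, GKM.child, GKM.T, sat_runsAtZero_prop]
    rcases ht with rfl | rfl
    exacts [⟨true, rfl⟩, ⟨false, rfl⟩]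
  · rw [GKM.sat_exi_box_qmv_iff]
    rintro ⟨-, b, hb⟩
    simp only [alternating, GKM.R, GKM.child, GKM.T, sat_runsAtZero_prop] at hb
    cases b
    · simpa using (hb 0 (by simp)).2
    · simpa using (hb 1 (by simp)).2
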